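/- arXiv:1812.10705 — 2 statements merged into one kernel-verified Lean document; each statement's English description precedes it below -/
import Mathlib

section
/- Let d ≥ 1, let ρ = (ρ₁,…,ρ_k) be a list of k cycle structures for S_d, let 1 ≤ i < k, let σ₁,…,σ_i be permutations in S_d such that σ_j has cycle structure ρ_j for each j ≤ i, and let g be an element of the centralizer of {σ₁,…,σ_{i−1}} in S_d. Then there exist permutations σ_{i+1},…,σ_k ∈ S_d with σ_j having cycle structure ρ_j for each j > i such that (σ₁,…,σ_i,σ_{i+1},…,σ_k) is a transitive product-one tuple, if and only if there exist permutations τ_{i+1},…,τ_k ∈ S_d with τ_j having cycle structure ρ_j for each j > i such that (σ₁,…,σ_{i−1}, g·σ_i·g⁻¹, τ_{i+1},…,τ_k) is a transitive product-one tuple. -/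
/-- Cycle structure of a permutation of `Fin d`, including fixed points as 1-cycles. -/
def fullCycleType {d : ℕ} (σ : Equiv.Perm (Fin d)) : Multiset ℕ :=
  σ.cycleType + Multiset.replicate (d - σ.cycleType.sum) 1

/-- Product of a list of permutations, composed left-to-right
(apply the first permutation first). -/
def seqProd {d : ℕ} (l : List (Equiv.Perm (Fin d))) : Equiv.Perm (Fin d) :=
  l.foldr (fun σ acc => σ.trans acc) (Equiv.refl (Fin d))

lemma fullCycleType_conj {d : ℕ} (g σ : Equiv.Perm (Fin d)) :
    fullCycleType (g * σ * g⁻¹) = fullCycleType σ := by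
  unfold fullCycleType
  rw [Equiv.Perm.cycleType_conj]

lemma seqProd_conj {d : ℕ} (g : Equiv.Perm (Fin d)) (l : List (Equiv.Perm (Fin d))) :
    seqProd (l.map (fun x => g * x * g⁻¹)) = g * seqProd l * g⁻¹ := by
  induction l with
  | nil =>
      show Equiv.refl (Fin d) = g * Equiv.refl (Fin d) * g⁻¹
      have : g * Equiv.refl (Fin d) * g⁻¹ = g * g⁻¹ := rfl
      rw [this, mul_inv_cancel]; rfl
  | cons a l ih =>
      have h1 : seqProd ((a :: l).map (fun x => g * x * g⁻¹))
          = seqProd (l.map (fun x => g * x * g⁻¹)) * (g * a * g⁻¹) := rfl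
      have h2 : seqProd (a :: l) = seqProd l * a := rfl
      rw [h1, h2, ih]
      group

lemma conj_mem_closure {d : ℕ} (g h : Equiv.Perm (Fin d)) (S : Set (Equiv.Perm (Fin d)))
    (hmem : h ∈ Subgroup.closure S) :
    g * h * g⁻¹ ∈ Subgroup.closure ((fun x => g * x * g⁻¹) '' S) := by
  have h2 := Subgroup.mem_map_of_mem ((MulAut.conj g).toMonoidHom) hmem
  rw [MonoidHom.map_closure] at h2
  have hset : (⇑(MulAut.conj g).toMonoidHom) '' S = (fun x => g * x * g⁻¹) '' S := by
    apply Set.image_congr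
    intro x _
    rfl
  rw [hset] at h2
  exact h2

lemma trans_conj {d k : ℕ} (g : Equiv.Perm (Fin d)) (τ : ℕ → Equiv.Perm (Fin d))
    (ht : ∀ x y : Fin d, ∃ h ∈ Subgroup.closure (τ '' (Set.Iio k)), h x = y) :
    ∀ x y : Fin d, ∃ h ∈ Subgroup.closure ((fun j => g * τ j * g⁻¹) '' (Set.Iio k)),
      h x = y := by
  intro x y
  obtain ⟨h, hmem, hxy⟩ := ht (g⁻¹ x) (g⁻¹ y)
  refine ⟨g * h * g⁻¹, ?_, ?_⟩
  · have himg : (fun j => g * τ j * g⁻¹) '' (Set.Iio k)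
        = (fun x => g * x * g⁻¹) '' (τ '' (Set.Iio k)) := by
      rw [Set.image_image]
    rw [himg]
    exact conj_mem_closure g h _ hmem
  · show g (h (g⁻¹ x)) = y
    rw [hxy]
    simp

/-- the permutations `σ 0, …, σ (i-1)` (with prescribed cycle structures
`ρ 0, …, ρ (i-1)`) can be completed to a transitive product-one tuple of length `k` with
cycle structures `ρ`, iff the same holds after replacing the last one, `σ (i-1)`, by its
conjugate `g * σ (i-1) * g⁻¹` for `g` in the centralizer of `σ 0, …, σ (i-2)`. -/
theorem stmt1 (d k i : ℕ) (hd : 1 ≤ d) (hi : 1 ≤ i) (hik : i < k)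
    (ρ : ℕ → Multiset ℕ) (σ : ℕ → Equiv.Perm (Fin d))
    (hσ : ∀ j < i, fullCycleType (σ j) = ρ j)
    (g : Equiv.Perm (Fin d))
    (hg : ∀ j < i - 1, g * σ j = σ j * g) :
    (∃ τ : ℕ → Equiv.Perm (Fin d),
      (∀ j < i, τ j = σ j) ∧
      (∀ j, i ≤ j → j < k → fullCycleType (τ j) = ρ j) ∧
      seqProd ((List.range k).map τ) = Equiv.refl (Fin d) ∧
      (∀ x y : Fin d, ∃ h ∈ Subgroup.closure (τ '' (Set.Iio k)), h x = y))
    ↔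
    (∃ τ : ℕ → Equiv.Perm (Fin d),
      (∀ j < i - 1, τ j = σ j) ∧
      τ (i - 1) = g * σ (i - 1) * g⁻¹ ∧
      (∀ j, i ≤ j → j < k → fullCycleType (τ j) = ρ j) ∧
      seqProd ((List.range k).map τ) = Equiv.refl (Fin d) ∧
      (∀ x y : Fin d, ∃ h ∈ Subgroup.closure (τ '' (Set.Iio k)), h x = y)) := by
  constructor
  · rintro ⟨τ, h1, h2, h3, h4⟩
    refine ⟨fun j => g * τ j * g⁻¹, ?_, ?_, ?_, ?_, trans_conj g τ h4⟩
    · intro j hj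
      show g * τ j * g⁻¹ = σ j
      rw [h1 j (lt_of_lt_of_le hj (Nat.sub_le i 1)), hg j hj]
      group
    · show g * τ (i - 1) * g⁻¹ = g * σ (i - 1) * g⁻¹
      rw [h1 (i - 1) (Nat.sub_lt hi one_pos)]
    · intro j hij hjk
      show fullCycleType (g * τ j * g⁻¹) = ρ j
      rw [fullCycleType_conj]
      exact h2 j hij hjk
    · have heq : ((List.range k).map fun j => g * τ j * g⁻¹)
          = ((List.range k).map τ).map (fun x => g * x * g⁻¹) := by
        rw [List.map_map]; rfl
      rw [heq, seqProd_conj, h3]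
      have : g * Equiv.refl (Fin d) * g⁻¹ = g * g⁻¹ := rfl
      rw [this, mul_inv_cancel]; rfl
  · rintro ⟨τ, h1, h1', h2, h3, h4⟩
    refine ⟨fun j => g⁻¹ * τ j * (g⁻¹)⁻¹, ?_, ?_, ?_, ?_⟩
    · intro j hj
      rcases Nat.lt_or_ge j (i - 1) with hj' | hj'
      · show g⁻¹ * τ j * (g⁻¹)⁻¹ = σ j
        rw [h1 j hj', inv_inv, mul_assoc, ← hg j hj']
        group
      · have hje : j = i - 1 := by omega
        show g⁻¹ * τ j * (g⁻¹)⁻¹ = σ j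
        rw [hje, h1']
        group
    · intro j hij hjk
      show fullCycleType (g⁻¹ * τ j * (g⁻¹)⁻¹) = ρ j
      rw [fullCycleType_conj]
      exact h2 j hij hjk
    · have heq : ((List.range k).map fun j => g⁻¹ * τ j * (g⁻¹)⁻¹)
          = ((List.range k).map τ).map (fun x => g⁻¹ * x * (g⁻¹)⁻¹) := by
        rw [List.map_map]; rfl
      rw [heq, seqProd_conj, h3]
      have : g⁻¹ * Equiv.refl (Fin d) * (g⁻¹)⁻¹ = g⁻¹ * (g⁻¹)⁻¹ := rfl
      rw [this, mul_inv_cancel]; rfl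
    · exact trans_conj g⁻¹ τ h4
end

section
/- In the symmetric group S₆, the permutations σ₁ = (1 2 3 4 5), σ₂ = (1 3 4 6 2), σ₃ = (2 6 3 5 4) each have cycle structure [1,5], satisfy σ₁·σ₂·σ₃ = identity, and the subgroup they generate acts transitively on {1,…,6}. Hence there exists a transitive product-one tuple in S₆ of length 3 with ramification type [[1,5]³]. -/
set_option maxRecDepth 20000

def σ1 : Equiv.Perm (Fin 6) := c[0, 1, 2, 3, 4]

def σ2 : Equiv.Perm (Fin 6) := c[0, 2, 3, 5, 1]

def σ3 : Equiv.Perm (Fin 6) := c[1, 5, 2, 4, 3]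

lemma fct_aux (σ : Equiv.Perm (Fin 6)) (h : σ.IsCycle) (h5 : σ.support.card = 5) :
    fullCycleType σ = ({1, 5} : Multiset ℕ) := by
  unfold fullCycleType
  rw [h.cycleType, h5]
  decide

lemma hc1 : fullCycleType σ1 = ({1, 5} : Multiset ℕ) :=
  fct_aux _ (Cycle.isCycle_formPerm _ _ ((Cycle.nontrivial_coe_nodup_iff (by decide)).mpr
    (by decide))) (by decide)

lemma hc2 : fullCycleType σ2 = ({1, 5} : Multiset ℕ) :=
  fct_aux _ (Cycle.isCycle_formPerm _ _ ((Cycle.nontrivial_coe_nodup_iff (by decide)).mpr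
    (by decide))) (by decide)

lemma hc3 : fullCycleType σ3 = ({1, 5} : Multiset ℕ) :=
  fct_aux _ (Cycle.isCycle_formPerm _ _ ((Cycle.nontrivial_coe_nodup_iff (by decide)).mpr
    (by decide))) (by decide)

lemma trans_aux (H : Subgroup (Equiv.Perm (Fin 6))) (h1 : σ1 ∈ H) (h2 : σ2 ∈ H) :
    ∀ x y : Fin 6, ∃ g ∈ H, g x = y := by
  have reach : ∀ x : Fin 6, ∃ g ∈ H, g 0 = x := by
    intro x
    fin_cases x
    · exact ⟨1, H.one_mem, by decide⟩
    · exact ⟨σ1, h1, by decide⟩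
    · exact ⟨σ1 ^ 2, H.pow_mem h1 2, by decide⟩
    · exact ⟨σ1 ^ 3, H.pow_mem h1 3, by decide⟩
    · exact ⟨σ1 ^ 4, H.pow_mem h1 4, by decide⟩
    · exact ⟨σ2 ^ 3, H.pow_mem h2 3, by decide⟩
  intro x y
  obtain ⟨gx, hgx, hgx0⟩ := reach x
  obtain ⟨gy, hgy, hgy0⟩ := reach y
  refine ⟨gy * gx⁻¹, H.mul_mem hgy (H.inv_mem hgx), ?_⟩
  have : gx⁻¹ x = 0 := by rw [← hgx0]; simp
  simp [Equiv.Perm.mul_apply, this, hgy0]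

theorem stmt6 :
    (fullCycleType σ1 = ({1, 5} : Multiset ℕ) ∧ fullCycleType σ2 = ({1, 5} : Multiset ℕ) ∧ fullCycleType σ3 = ({1, 5} : Multiset ℕ)) ∧
    seqProd [σ1, σ2, σ3] = Equiv.refl (Fin 6) ∧
    (∀ x y : Fin 6, ∃ g ∈ Subgroup.closure ({σ1, σ2, σ3} : Set (Equiv.Perm (Fin 6))), g x = y) ∧
    (∃ τ : Fin 3 → Equiv.Perm (Fin 6),
      (∀ i, fullCycleType (τ i) = ({1, 5} : Multiset ℕ)) ∧
      seqProd (List.ofFn τ) = Equiv.refl (Fin 6) ∧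
      (∀ x y : Fin 6, ∃ g ∈ Subgroup.closure (Set.range τ), g x = y)) := by
  have hprod : seqProd [σ1, σ2, σ3] = Equiv.refl (Fin 6) := by
    unfold seqProd
    simp only [List.foldr]
    decide
  refine ⟨⟨hc1, hc2, hc3⟩, hprod, ?_, ?_⟩
  · apply trans_aux
    · exact Subgroup.subset_closure (by simp)
    · exact Subgroup.subset_closure (by simp)
  · refine ⟨![σ1, σ2, σ3], ?_, ?_, ?_⟩
    · intro i; fin_cases i <;> [exact hc1; exact hc2; exact hc3]
    · simpa using hprod
    · apply trans_aux
      · exact Subgroup.subset_closure ⟨0, rfl⟩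
      · exact Subgroup.subset_closure ⟨1, rfl⟩
end
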